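/- arXiv:2201.13252 — 2 statements merged into one kernel-verified Lean document; each statement's English description precedes it below -/
import Mathlib

section
/- The action of the generators π_i (1 ≤ i ≤ n−1) on the ℂ-span of standard immaculate tableaux of shape α given by: π_i·𝒯 = 𝒯 if i is not a descent of 𝒯; π_i·𝒯 = 0 if i and i+1 both lie in the first column of 𝒯; and π_i·𝒯 = s_i·𝒯 otherwise, satisfies the defining relations of H_n(0), hence defines an H_n(0)-module 𝒱_α. -/
/-- Index set `{1, …, n-1}` for the generators of `H_n(0)` and for the simple
transpositions of `S_n`. -/
def HIdx (n : ℕ) := {i : ℕ // 1 ≤ i ∧ i + 1 ≤ n}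

/-- The defining relations of the 0-Hecke algebra `H_n(0)`:
`π_i² = π_i`, the braid relations, and commutation for `|i-j| ≥ 2`. -/
inductive HeckeRel (n : ℕ) :
    FreeAlgebra ℂ (HIdx n) → FreeAlgebra ℂ (HIdx n) → Prop
  | idem (i : HIdx n) :
      HeckeRel n (FreeAlgebra.ι ℂ i * FreeAlgebra.ι ℂ i) (FreeAlgebra.ι ℂ i)
  | braid (i j : HIdx n) (h : i.1 + 1 = j.1) :
      HeckeRel n (FreeAlgebra.ι ℂ i * FreeAlgebra.ι ℂ j * FreeAlgebra.ι ℂ i)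
        (FreeAlgebra.ι ℂ j * FreeAlgebra.ι ℂ i * FreeAlgebra.ι ℂ j)
  | comm (i j : HIdx n) (h : i.1 + 2 ≤ j.1) :
      HeckeRel n (FreeAlgebra.ι ℂ i * FreeAlgebra.ι ℂ j)
        (FreeAlgebra.ι ℂ j * FreeAlgebra.ι ℂ i)

/-- The 0-Hecke algebra `H_n(0)`, presented by generators and relations. -/
abbrev Hecke0 (n : ℕ) := RingQuot (HeckeRel n)

/-- The generator `π_i` of `H_n(0)`. -/
def piGen (n : ℕ) (i : HIdx n) : Hecke0 n :=
  RingQuot.mkAlgHom ℂ (HeckeRel n) (FreeAlgebra.ι ℂ i)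


/-- A composition of `n`: a list of positive integers summing to `n`. -/
def IsComposition (n : ℕ) (l : List ℕ) : Prop :=
  (∀ x ∈ l, 0 < x) ∧ l.sum = n

/-- The cells of the composition diagram of `α`, as pairs `(row, column)`
(0-based, rows numbered downward). -/
def sitCells (α : List ℕ) : Set (ℕ × ℕ) :=
  {rc | rc.1 < α.length ∧ rc.2 < α.getD rc.1 0}

/-- A standard immaculate tableau of shape `α`, encoded by the position
`p e = (row, column)` of each entry `e ∈ {1,…,n}`: the entries fill the diagram
bijectively, rows increase from left to right, and the first column increases
from top to bottom.  (Entries outside `{1,…,n}` are normalized to `(0,0)`.) -/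
def IsSIT (n : ℕ) (α : List ℕ) (p : ℕ → ℕ × ℕ) : Prop :=
  Set.BijOn p (Set.Icc 1 n) (sitCells α) ∧
  (∀ a ∈ Set.Icc 1 n, ∀ b ∈ Set.Icc 1 n,
    (p a).1 = (p b).1 → (p a).2 < (p b).2 → a < b) ∧
  (∀ a ∈ Set.Icc 1 n, ∀ b ∈ Set.Icc 1 n,
    (p a).2 = 0 → (p b).2 = 0 → (p a).1 < (p b).1 → a < b) ∧
  (∀ e : ℕ, e ∉ Set.Icc 1 n → p e = (0, 0))


/-!
Record a tableau by the position function `p` of its entries. Then `π_i` acts on position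
functions as a partial map: it fixes `p` when `i` is not a descent, kills it when `i` and
`i + 1` are both in the first column, and otherwise precomposes `p` with the transposition
`(i i+1)`. These partial maps satisfy the 0-Hecke relations for *every* position
function (a finite case analysis on the rows of `i, i+1, i+2` and on which of them lie in the
first column), and they preserve standard immaculate tableaux. Linearising a family of partial
maps satisfying the relations gives a representation of `H_n(0)`.
-/

open Equiv

section PartialLinearMap

variable (R : Type*) [CommSemiring R] {X : Type*}

/-- The linear extension of a partial map, sending `none` to `0`. -/
noncomputable def partialLinearMap (f : X → Option X) : (X →₀ R) →ₗ[R] (X →₀ R) :=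
  Finsupp.lift (X →₀ R) R X fun x => (f x).elim 0 fun y => Finsupp.single y 1

variable {R}

theorem partialLinearMap_single (f : X → Option X) (x : X) (c : R) :
    partialLinearMap R f (Finsupp.single x c) = c • (f x).elim 0 fun y => Finsupp.single y 1 := by
  simp [partialLinearMap]

theorem partialLinearMap_mul (f g : X → Option X) :
    partialLinearMap R f * partialLinearMap R g = partialLinearMap R fun x => (g x).bind f := by
  refine Finsupp.lhom_ext fun x c => ?_
  rw [Module.End.mul_apply, partialLinearMap_single, partialLinearMap_single]
  cases g x <;> simp [partialLinearMap_single]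

end PartialLinearMap

section HeckeAction

variable {n : ℕ} {X : Type*}

/-- The defining relations of `H_n(0)` for a family of partial maps, composed as in the Kleisli
category of `Option`. -/
structure IsHeckeAction (f : HIdx n → X → Option X) : Prop where
  idem : ∀ i x, (f i x).bind (f i) = f i x
  braid : ∀ i j : HIdx n, i.1 + 1 = j.1 → ∀ x,
    ((f i x).bind (f j)).bind (f i) = ((f j x).bind (f i)).bind (f j)
  comm : ∀ i j : HIdx n, i.1 + 2 ≤ j.1 → ∀ x, (f j x).bind (f i) = (f i x).bind (f j)

theorem IsHeckeAction.heckeRel_lift {f : HIdx n → X → Option X} (hf : IsHeckeAction f)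
    ⦃a b : FreeAlgebra ℂ (HIdx n)⦄ (h : HeckeRel n a b) :
    FreeAlgebra.lift ℂ (fun i => partialLinearMap ℂ (f i)) a =
      FreeAlgebra.lift ℂ (fun i => partialLinearMap ℂ (f i)) b := by
  cases h with
  | idem i => simp only [map_mul, FreeAlgebra.lift_ι_apply, partialLinearMap_mul, hf.idem]
  | braid i j hij =>
    simp only [map_mul, FreeAlgebra.lift_ι_apply, partialLinearMap_mul, ← Option.bind_assoc,
      hf.braid i j hij]
  | comm i j hij =>
    simp only [map_mul, FreeAlgebra.lift_ι_apply, partialLinearMap_mul, hf.comm i j hij]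

noncomputable def IsHeckeAction.toAlgHom {f : HIdx n → X → Option X} (hf : IsHeckeAction f) :
    Hecke0 n →ₐ[ℂ] Module.End ℂ (X →₀ ℂ) :=
  RingQuot.liftAlgHom ℂ
    ⟨FreeAlgebra.lift ℂ fun i => partialLinearMap ℂ (f i), hf.heckeRel_lift⟩

theorem IsHeckeAction.toAlgHom_piGen {f : HIdx n → X → Option X} (hf : IsHeckeAction f)
    (i : HIdx n) : hf.toAlgHom (piGen n i) = partialLinearMap ℂ (f i) := by
  rw [IsHeckeAction.toAlgHom, piGen, RingQuot.liftAlgHom_mkAlgHom_apply, FreeAlgebra.lift_ι_apply]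

end HeckeAction

section RestrictPartial

variable {X : Type*} {P : X → Prop}

def restrictPartial (f : X → Option X) (hf : ∀ x y, P x → f x = some y → P y) :
    Subtype P → Option (Subtype P) :=
  fun x => (f x.1).pmap Subtype.mk fun y hy => hf x.1 y x.2 hy

variable {f : X → Option X} {hf : ∀ x y, P x → f x = some y → P y}

theorem map_val_restrictPartial (x : Subtype P) :
    (restrictPartial f hf x).map Subtype.val = f x.1 := by
  simp [restrictPartial, Option.map_pmap]

theorem restrictPartial_eq_some_iff {x y : Subtype P} :
    restrictPartial f hf x = some y ↔ f x.1 = some y.1 := by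
  rw [← (Option.map_injective Subtype.val_injective).eq_iff, map_val_restrictPartial,
    Option.map_some]

theorem restrictPartial_eq_none_iff {x : Subtype P} :
    restrictPartial f hf x = none ↔ f x.1 = none := by
  rw [← Option.map_eq_none_iff, map_val_restrictPartial]

theorem map_val_bind_restrictPartial (o : Option (Subtype P)) :
    (o.bind (restrictPartial f hf)).map Subtype.val = (o.map Subtype.val).bind f := by
  cases o <;> simp only [Option.bind_none, Option.bind_some, Option.map_none, Option.map_some,
    map_val_restrictPartial]

theorem IsHeckeAction.restrictPartial {n : ℕ} {f : HIdx n → X → Option X}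
    (hf : IsHeckeAction f) (hP : ∀ i x y, P x → f i x = some y → P y) :
    IsHeckeAction fun i => restrictPartial (f i) (hP i) := by
  have hinj := Option.map_injective (Subtype.val_injective (p := P))
  refine ⟨fun i x => hinj ?_, fun i j hij x => hinj ?_, fun i j hij x => hinj ?_⟩ <;>
    simp only [map_val_bind_restrictPartial, map_val_restrictPartial]
  exacts [hf.idem i x, hf.braid i j hij x, hf.comm i j hij x]

end RestrictPartial

section PiStep

/-- `π_i` on position functions `p : entry ↦ (row, column)`, with `none` standing for `0`. -/
def piStep (i : ℕ) (p : ℕ → ℕ × ℕ) : Option (ℕ → ℕ × ℕ) :=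
  if (p i).1 < (p (i + 1)).1 then
    if (p i).2 = 0 ∧ (p (i + 1)).2 = 0 then none else some (p ∘ swap i (i + 1))
  else some p

variable {i : ℕ} {p : ℕ → ℕ × ℕ}

theorem piStep_eq_some_self (h : ¬(p i).1 < (p (i + 1)).1) : piStep i p = some p := if_neg h

theorem piStep_eq_none (h : (p i).1 < (p (i + 1)).1)
    (hc : (p i).2 = 0 ∧ (p (i + 1)).2 = 0) : piStep i p = none := by
  rw [piStep, if_pos h, if_pos hc]

theorem piStep_eq_some_swap (h : (p i).1 < (p (i + 1)).1)
    (hc : ¬((p i).2 = 0 ∧ (p (i + 1)).2 = 0)) : piStep i p = some (p ∘ swap i (i + 1)) := by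
  rw [piStep, if_pos h, if_neg hc]

theorem piStep_bind_self (i : ℕ) (p : ℕ → ℕ × ℕ) :
    (piStep i p).bind (piStep i) = piStep i p := by
  simp only [piStep.eq_1 i p]
  split_ifs <;>
    simp only [Option.bind_some, Option.bind_none, piStep.eq_1, Function.comp_apply,
      swap_apply_left, swap_apply_right] <;>
    split_ifs <;> first | rfl | omega

theorem piStep_comm {i j : ℕ} (hij : i + 2 ≤ j) (p : ℕ → ℕ × ℕ) :
    (piStep j p).bind (piStep i) = (piStep i p).bind (piStep j) := by
  have hσ : swap j (j + 1) * swap i (i + 1) = swap i (i + 1) * swap j (j + 1) :=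
    (Perm.disjoint_swap_swap (by simp; omega)).commute
  have h1 : swap i (i + 1) j = j := swap_apply_of_ne_of_ne (by omega) (by omega)
  have h2 : swap i (i + 1) (j + 1) = j + 1 := swap_apply_of_ne_of_ne (by omega) (by omega)
  have h3 : swap j (j + 1) i = i := swap_apply_of_ne_of_ne (by omega) (by omega)
  have h4 : swap j (j + 1) (i + 1) = i + 1 := swap_apply_of_ne_of_ne (by omega) (by omega)
  simp only [piStep.eq_1 _ p]
  split_ifs <;>
    simp only [Option.bind_some, Option.bind_none, piStep.eq_1, Function.comp_apply,
      h1, h2, h3, h4] <;>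
    split_ifs <;>
    first
    | rfl
    | (exfalso; tauto)
    | exact congrArg (fun σ : Perm ℕ => some (p ∘ σ)) hσ

theorem swap_braid (i : ℕ) :
    swap i (i + 1) * swap (i + 1) (i + 2) * swap i (i + 1) =
      swap (i + 1) (i + 2) * swap i (i + 1) * swap (i + 1) (i + 2) := by
  rw [swap_mul_swap_mul_swap (by omega) (by omega), swap_comm i, swap_comm (i + 1) (i + 2),
    swap_mul_swap_mul_swap (by omega) (by omega), swap_comm]

theorem piStep_braid (i : ℕ) (p : ℕ → ℕ × ℕ) :
    ((piStep i p).bind (piStep (i + 1))).bind (piStep i) =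
      ((piStep (i + 1) p).bind (piStep i)).bind (piStep (i + 1)) := by
  have h1 : swap i (i + 1) (i + 1 + 1) = i + 1 + 1 := swap_apply_of_ne_of_ne (by omega) (by omega)
  have h2 : swap (i + 1) (i + 1 + 1) i = i := swap_apply_of_ne_of_ne (by omega) (by omega)
  simp only [piStep.eq_1 _ p]
  split_ifs <;>
    simp only [Option.bind_some, Option.bind_none, piStep.eq_1, Function.comp_apply,
      h1, h2, swap_apply_left, swap_apply_right] <;>
    split_ifs <;>
    simp only [Option.bind_some, Option.bind_none, Function.comp_apply,
      h1, h2, swap_apply_left, swap_apply_right] <;>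
    split_ifs <;>
    first
    | rfl
    | (exfalso; omega)
    | (exfalso; tauto)
    | exact congrArg (fun σ : Perm ℕ => some (p ∘ σ)) (swap_braid i)

theorem isHeckeAction_piStep (n : ℕ) : IsHeckeAction fun i : HIdx n => piStep i.1 := by
  refine ⟨fun i => piStep_bind_self i.1, fun i j hij => ?_, fun i j hij => piStep_comm hij⟩
  rw [← hij]
  exact piStep_braid i.1

end PiStep

section StandardImmaculateTableau

theorem lt_of_swap_lt_swap {i a b : ℕ} (h : swap i (i + 1) a < swap i (i + 1) b)
    (hab : ¬(a = i + 1 ∧ b = i)) : a < b := by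
  simp only [swap_apply_def] at h
  split_ifs at h <;> omega

theorem mapsTo_swap_Icc {n i : ℕ} (hi : 1 ≤ i) (hin : i + 1 ≤ n) :
    Set.MapsTo (swap i (i + 1)) (Set.Icc 1 n) (Set.Icc 1 n) := by
  intro x hx
  simp only [Set.mem_Icc, swap_apply_def] at hx ⊢
  split_ifs <;> omega

variable {n : ℕ} {α : List ℕ} {p : ℕ → ℕ × ℕ}

theorem IsSIT.comp_swap (hp : IsSIT n α p) {i : ℕ} (hi : 1 ≤ i) (hin : i + 1 ≤ n)
    (hrow : (p i).1 ≠ (p (i + 1)).1) (hcol : ¬((p i).2 = 0 ∧ (p (i + 1)).2 = 0)) :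
    IsSIT n α (p ∘ swap i (i + 1)) := by
  obtain ⟨hbij, hrows, hcol₀, hout⟩ := hp
  have hmaps := mapsTo_swap_Icc hi hin
  have hswap : Set.BijOn (swap i (i + 1)) (Set.Icc 1 n) (Set.Icc 1 n) :=
    Set.InvOn.bijOn ⟨fun x _ => swap_apply_self _ _ x, fun x _ => swap_apply_self _ _ x⟩
      hmaps hmaps
  refine ⟨hbij.comp hswap, fun a ha b hb hr hc => ?_, fun a ha b hb ha₀ hb₀ hr => ?_,
    fun e he => ?_⟩
  · refine lt_of_swap_lt_swap (hrows _ (hmaps ha) _ (hmaps hb) hr hc) ?_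
    rintro ⟨rfl, rfl⟩
    exact hrow (by simpa using hr)
  · refine lt_of_swap_lt_swap (hcol₀ _ (hmaps ha) _ (hmaps hb) ha₀ hb₀ hr) ?_
    rintro ⟨rfl, rfl⟩
    exact hcol ⟨by simpa using ha₀, by simpa using hb₀⟩
  · have hfix : swap i (i + 1) e = e := swap_apply_of_ne_of_ne
      (by rintro rfl; exact he ⟨hi, by omega⟩) (by rintro rfl; exact he ⟨by omega, hin⟩)
    rw [Function.comp_apply, hfix, hout e he]

theorem IsSIT.of_piStep_eq_some (hp : IsSIT n α p) (i : HIdx n) {q : ℕ → ℕ × ℕ}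
    (h : piStep i.1 p = some q) : IsSIT n α q := by
  unfold piStep at h
  split_ifs at h with hrow hcol
  · cases h
    exact hp.comp_swap i.2.1 i.2.2 hrow.ne hcol
  · cases h
    exact hp

end StandardImmaculateTableau

theorem stmt12_general (n : ℕ) (α : List ℕ) :
    ∃ act : Hecke0 n →ₐ[ℂ] Module.End ℂ ({p : ℕ → ℕ × ℕ // IsSIT n α p} →₀ ℂ),
      ∀ i : HIdx n, ∀ T : {p : ℕ → ℕ × ℕ // IsSIT n α p},
        (¬ (T.1 i.1).1 < (T.1 (i.1 + 1)).1 →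
          act (piGen n i) (Finsupp.single T 1) = Finsupp.single T 1) ∧
        ((T.1 i.1).1 < (T.1 (i.1 + 1)).1 →
          (T.1 i.1).2 = 0 → (T.1 (i.1 + 1)).2 = 0 →
          act (piGen n i) (Finsupp.single T 1) = 0) ∧
        ((T.1 i.1).1 < (T.1 (i.1 + 1)).1 →
          ¬ ((T.1 i.1).2 = 0 ∧ (T.1 (i.1 + 1)).2 = 0) →
          ∃ T' : {p : ℕ → ℕ × ℕ // IsSIT n α p},
            T'.1 = T.1 ∘ (Equiv.swap i.1 (i.1 + 1)) ∧
            act (piGen n i) (Finsupp.single T 1) = Finsupp.single T' 1) := by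
  have hS := (isHeckeAction_piStep n).restrictPartial
    (P := IsSIT n α) fun i _ _ hp h => hp.of_piStep_eq_some i h
  refine ⟨hS.toAlgHom, fun i T => ⟨fun hd => ?_, fun hd h1 h2 => ?_, fun hd hc => ?_⟩⟩ <;>
    rw [hS.toAlgHom_piGen, partialLinearMap_single, one_smul]
  · rw [restrictPartial_eq_some_iff.2 (piStep_eq_some_self hd), Option.elim_some]
  · rw [restrictPartial_eq_none_iff.2 (piStep_eq_none hd ⟨h1, h2⟩), Option.elim_none]
  · let T' : {p : ℕ → ℕ × ℕ // IsSIT n α p} :=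
      ⟨_, T.2.comp_swap i.2.1 i.2.2 hd.ne hc⟩
    refine ⟨T', rfl, ?_⟩
    rw [(restrictPartial_eq_some_iff (y := T')).2 (piStep_eq_some_swap hd hc),
      Option.elim_some]

/-- the rules `π_i·𝒯 = 𝒯` if `i ∉ Des(𝒯)`, `π_i·𝒯 = 0` if `i` and
`i+1` both lie in the first column, and `π_i·𝒯 = s_i·𝒯` otherwise, satisfy the
defining relations of `H_n(0)`, i.e. they define an `H_n(0)`-module structure
`𝒱_α` on the ℂ-span of the standard immaculate tableaux of shape `α`.
(Here `i ∈ Des(𝒯)` iff `i` lies strictly above `i+1`, i.e. `row(i) < row(i+1)`.) -/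
theorem stmt12 (n : ℕ) (α : List ℕ) (hα : IsComposition n α) :
    ∃ act : Hecke0 n →ₐ[ℂ] Module.End ℂ ({p : ℕ → ℕ × ℕ // IsSIT n α p} →₀ ℂ),
      ∀ i : HIdx n, ∀ T : {p : ℕ → ℕ × ℕ // IsSIT n α p},
        (¬ (T.1 i.1).1 < (T.1 (i.1 + 1)).1 →
          act (piGen n i) (Finsupp.single T 1) = Finsupp.single T 1) ∧
        ((T.1 i.1).1 < (T.1 (i.1 + 1)).1 →
          (T.1 i.1).2 = 0 → (T.1 (i.1 + 1)).2 = 0 →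
          act (piGen n i) (Finsupp.single T 1) = 0) ∧
        ((T.1 i.1).1 < (T.1 (i.1 + 1)).1 →
          ¬ ((T.1 i.1).2 = 0 ∧ (T.1 (i.1 + 1)).2 = 0) →
          ∃ T' : {p : ℕ → ℕ × ℕ // IsSIT n α p},
            T'.1 = T.1 ∘ (Equiv.swap i.1 (i.1 + 1)) ∧
            act (piGen n i) (Finsupp.single T 1) = Finsupp.single T' 1) :=
  stmt12_general n α
end

section
/- Fix integers n ≥ 3, l ∈ [2, n−1], c ∈ [2, l]. Every element ω of the set S^{(c)}_{[l]} := {σ ∈ (S_n)_{[l]} : σ(1)<σ(2)<⋯<σ(c) and σ(c+1)<⋯<σ(l+1)} factors uniquely as ω = ζ · δ_u, where u = ω(1) ∈ [1, l−c+2], δ_u is the element of S^{(c)}_{[l]} with δ_u(i) = u+i−1 for 1 ≤ i ≤ c, and ζ ∈ (S_n)^{(c+u−1)}_{[u+1,l]}; moreover ℓ(ω) = ℓ(ζ) + ℓ(δ_u). -/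
/-- The simple transposition `s_i = (i, i+1)` (as a permutation of `ℕ`). -/
def sTr (i : ℕ) : Equiv.Perm ℕ := Equiv.swap i (i + 1)

/-- The parabolic subgroup `(S_n)_{[k₁,k₂]}` generated by `s_{k₁}, …, s_{k₂}`. -/
def parab (k₁ k₂ : ℕ) : Subgroup (Equiv.Perm ℕ) :=
  Subgroup.closure {π | ∃ i : ℕ, k₁ ≤ i ∧ i ≤ k₂ ∧ π = sTr i}

/-- `(S_n)_{[k₁,k₂]}^{(c)}`: the elements `σ` of the parabolic subgroup
`(S_n)_{[k₁,k₂]}` with `σ(k₁) < σ(k₁+1) < ⋯ < σ(c)` and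
`σ(c+1) < σ(c+2) < ⋯ < σ(k₂+1)`. -/
def PQ (k₁ k₂ c : ℕ) : Set (Equiv.Perm ℕ) :=
  {σ | σ ∈ parab k₁ k₂ ∧
    (∀ a b : ℕ, k₁ ≤ a → a < b → b ≤ c → σ a < σ b) ∧
    (∀ a b : ℕ, c + 1 ≤ a → a < b → b ≤ k₂ + 1 → σ a < σ b)}

/-- The Coxeter length of `σ`, i.e. its number of inversions. -/
noncomputable def invCount (σ : Equiv.Perm ℕ) : ℕ :=
  {q : ℕ × ℕ | q.1 < q.2 ∧ σ q.2 < σ q.1}.ncard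

/-!
Put `u = ω 1`. Being increasing on `[1, c]` and on `[c+1, ∞)`, `ω` sends `[1, c]` into `[u, ∞)`,
so it must send `c + j` to `j` for `j < u`; the same holds for `δ`, which moreover sends
`[1, c]` onto `[u, u+c-1]` and hence is the identity on `[c+u, ∞)`. Therefore `ζ = ω δ⁻¹`
fixes `[0, u]` and is increasing on `[u+1, c+u-1]` and on `[c+u, l+1]`. Every inversion
`(a, b)` of `δ` has `δ b < u ≤ δ a`, and `ζ` fixes `δ b` while keeping `ζ (δ a) ≥ u`; so the
inversions of `δ` are inversions of `ω`, and those of `ω` that are not inversions of `δ` are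
carried bijectively by `δ × δ` onto the inversions of `ζ`.
-/

open Equiv Set

theorem Equiv.Perm.apply_mem_of_forall_notMem {α : Type*} {s : Set α} {σ : Perm α}
    (h : ∀ x ∉ s, σ x = x) {x : α} (hx : x ∈ s) : σ x ∈ s := by
  by_contra hσx
  have hfix : σ x = x := σ.injective (h _ hσx)
  exact hσx (by rwa [hfix])

def inversions {α : Type*} [LinearOrder α] (σ : Perm α) : Set (α × α) :=
  {q | q.1 < q.2 ∧ σ q.2 < σ q.1}

section Inversions

variable {α : Type*} [LinearOrder α] {ζ δ : Perm α}

theorem inversions_mul_sdiff_eq_preimage (hsub : inversions δ ⊆ inversions (ζ * δ)) :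
    inversions (ζ * δ) \ inversions δ = Prod.map δ δ ⁻¹' inversions ζ := by
  ext ⟨a, b⟩
  simp only [inversions, mem_sdiff, mem_ofPred_eq, mem_preimage, Prod.map, Perm.mul_apply]
  constructor
  · rintro ⟨⟨hab, hζ⟩, hδ⟩
    exact ⟨lt_of_le_of_ne (not_lt.1 fun h => hδ ⟨hab, h⟩) (δ.injective.ne hab.ne), hζ⟩
  · rintro ⟨hδ, hζ⟩
    have hab : a < b := by
      rcases lt_trichotomy a b with h | rfl | h
      · exact h
      · exact absurd hδ (lt_irrefl _)
      · exact absurd hζ (hsub (show (b, a) ∈ inversions δ from ⟨h, hδ⟩)).2.asymm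
    exact ⟨⟨hab, hζ⟩, fun h => h.2.asymm hδ⟩

theorem ncard_inversions_mul (hfin : (inversions (ζ * δ)).Finite)
    (hsub : inversions δ ⊆ inversions (ζ * δ)) :
    (inversions (ζ * δ)).ncard = (inversions ζ).ncard + (inversions δ).ncard := by
  rw [← ncard_sdiff_add_ncard_of_subset hsub hfin, inversions_mul_sdiff_eq_preimage hsub,
    ncard_preimage_of_injective_subset_range (f := Prod.map δ δ) (δ.prodCongr δ).injective]
  exact fun q _ => (δ.prodCongr δ).surjective q

end Inversions

section Parabolic

variable {k₁ k₂ : ℕ} {σ : Perm ℕ}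

theorem swap_mem_parab {a b : ℕ} (ha : k₁ ≤ a) (hab : a ≤ b) (hb : b ≤ k₂ + 1) :
    swap a b ∈ parab k₁ k₂ := by
  induction b, hab using Nat.le_induction with
  | base =>
    rw [swap_self]
    exact (parab k₁ k₂).one_mem
  | succ b _ ih =>
    exact SubmonoidClass.swap_mem_trans _ (ih (by omega))
      (Subgroup.subset_closure ⟨b, by omega, by omega, rfl⟩)

theorem mem_parab_iff : σ ∈ parab k₁ k₂ ↔ ∀ x ∉ Icc k₁ (k₂ + 1), σ x = x := by
  constructor
  · intro hσ
    have hle : parab k₁ k₂ ≤ fixingSubgroup (Perm ℕ) (Icc k₁ (k₂ + 1))ᶜ := by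
      refine (Subgroup.closure_le _).2 ?_
      rintro _ ⟨i, hi₁, hi₂, rfl⟩
      refine (mem_fixingSubgroup_iff _).2 fun x hx => ?_
      simp only [mem_compl_iff, mem_Icc, not_and_or, not_le] at hx
      exact swap_apply_of_ne_of_ne (by omega) (by omega)
    exact (mem_fixingSubgroup_iff _).1 (hle hσ)
  · intro hσ
    rw [parab, mem_closure_isSwap (by rintro _ ⟨i, -, -, rfl⟩; exact ⟨i, i + 1, by omega, rfl⟩)]
    refine ⟨(finite_Icc k₁ (k₂ + 1)).subset fun x hx => ?_, fun x => ?_⟩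
    · by_contra hout
      exact hx (hσ x hout)
    · by_cases hx : x ∈ Icc k₁ (k₂ + 1)
      · have hσx := Perm.apply_mem_of_forall_notMem hσ hx
        refine ⟨⟨swap (σ x) x, ?_⟩, swap_apply_right _ _⟩
        rcases le_total (σ x) x with h | h
        · exact swap_mem_parab hσx.1 h hx.2
        · rw [swap_comm]
          exact swap_mem_parab hx.1 h hσx.2
      · rw [hσ x hx]
        exact MulAction.mem_orbit_self x

theorem le_apply_of_mem_parab (hσ : σ ∈ parab k₁ k₂) {x : ℕ} (hx : k₁ ≤ x) : k₁ ≤ σ x :=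
  Perm.apply_mem_of_forall_notMem (s := Ici k₁)
    (fun y hy => mem_parab_iff.1 hσ y fun h => hy h.1) hx

theorem apply_le_of_mem_parab (hσ : σ ∈ parab k₁ k₂) {x : ℕ} (hx : x ≤ k₂ + 1) :
    σ x ≤ k₂ + 1 :=
  Perm.apply_mem_of_forall_notMem (s := Iic (k₂ + 1))
    (fun y hy => mem_parab_iff.1 hσ y fun h => hy h.2) hx

theorem apply_eq_self_of_mem_parab_of_lt (hσ : σ ∈ parab k₁ k₂) {x : ℕ} (hx : k₂ + 1 < x) :
    σ x = x :=
  mem_parab_iff.1 hσ x fun h => absurd h.2 (not_le.2 hx)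

theorem inversions_finite_of_mem_parab (hσ : σ ∈ parab k₁ k₂) : (inversions σ).Finite := by
  refine ((finite_Iic (k₂ + 1)).prod (finite_Iic (k₂ + 1))).subset ?_
  rintro ⟨a, b⟩ ⟨hab, hba⟩
  dsimp only at hab hba
  have hb : b ≤ k₂ + 1 := by
    by_contra h
    rw [apply_eq_self_of_mem_parab_of_lt hσ (x := b) (by omega)] at hba
    by_cases ha : a ≤ k₂ + 1
    · have := apply_le_of_mem_parab hσ ha
      omega
    · rw [apply_eq_self_of_mem_parab_of_lt hσ (x := a) (by omega)] at hba
      omega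
  exact ⟨show a ≤ k₂ + 1 by omega, hb⟩

end Parabolic


theorem StrictMonoOn.add_le_apply_add {f : ℕ → ℕ} {s : Set ℕ} (hf : StrictMonoOn f s) {a j : ℕ}
    (hs : Icc a (a + j) ⊆ s) : f a + j ≤ f (a + j) := by
  induction j with
  | zero => rfl
  | succ j ih =>
    have hlt := hf (hs ⟨by omega, by omega⟩) (hs ⟨by omega, le_rfl⟩)
      (by omega : a + j < a + (j + 1))
    have hle := ih ((Icc_subset_Icc_right (by omega)).trans hs)
    omega

theorem StrictMonoOn.apply_add_eq_of_surjOn {f : ℕ → ℕ} {a b m : ℕ} (hf : StrictMonoOn f (Ici a))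
    (hb : b ≤ f a) (hsurj : SurjOn f (Ici a) (Ico b m)) {j : ℕ} (hj : b + j < m) :
    f (a + j) = b + j := by
  induction j using Nat.strong_induction_on with
  | _ j ih =>
  obtain ⟨x, hx, hfx⟩ := hsurj ⟨by omega, hj⟩
  obtain ⟨i, rfl⟩ := Nat.exists_eq_add_of_le hx
  have hi := hf.add_le_apply_add (j := i) (Icc_subset_Ici_self)
  rcases lt_trichotomy i j with h | rfl | h
  · have := ih i h (by omega)
    omega
  · exact hfx
  · omega

theorem Equiv.Perm.apply_eq_self_of_strictMonoOn_Ici {σ : Perm ℕ} {m : ℕ}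
    (hmono : StrictMonoOn σ (Ici m)) (hmaps : MapsTo σ (Iio m) (Iio m))
    (hsurj : SurjOn σ (Iio m) (Iio m)) {x : ℕ} (hx : m ≤ x) : σ x = x := by
  obtain ⟨j, rfl⟩ := Nat.exists_eq_add_of_le hx
  refine hmono.apply_add_eq_of_surjOn (m := m + j + 1) ?_ ?_ (by omega)
  · by_contra! h
    obtain ⟨y, hy, hσy⟩ := hsurj h
    exact hy.ne (σ.injective hσy)
  · intro y hy
    refine ⟨σ⁻¹ y, ?_, by simp⟩
    by_contra h
    have hlt : σ (σ⁻¹ y) < m := hmaps (show σ⁻¹ y ∈ Iio m by simpa using h)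
    simp only [Perm.coe_inv, apply_symm_apply] at hlt
    exact absurd hy.1 (not_le.2 hlt)

section Shuffle

variable {l c : ℕ} {σ ω δ ζ : Perm ℕ}

theorem strictMonoOn_Icc_of_mem_PQ {k₁ : ℕ} (hσ : σ ∈ PQ k₁ l c) : StrictMonoOn σ (Icc k₁ c) :=
  fun a ha b hb hab => hσ.2.1 a b ha.1 hab hb.2

theorem strictMonoOn_Ici_of_mem_PQ {k₁ : ℕ} (hσ : σ ∈ PQ k₁ l c) :
    StrictMonoOn σ (Ici (c + 1)) := by
  intro a ha b hb hab
  by_cases hbl : b ≤ l + 1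
  · exact hσ.2.2 a b ha hab hbl
  rw [apply_eq_self_of_mem_parab_of_lt hσ.1 (x := b) (by omega)]
  by_cases hal : a ≤ l + 1
  · exact (apply_le_of_mem_parab hσ.1 hal).trans_lt (by omega)
  · rwa [apply_eq_self_of_mem_parab_of_lt hσ.1 (x := a) (by omega)]

theorem apply_zero_of_mem_PQ (hσ : σ ∈ PQ 1 l c) : σ 0 = 0 :=
  mem_parab_iff.1 hσ.1 0 fun h => by simp at h

theorem apply_add_eq_of_le_apply (hσ : σ ∈ PQ 1 l c) {u : ℕ}
    (hu : ∀ i, 1 ≤ i → i ≤ c → u ≤ σ i) {j : ℕ} (hj₁ : 1 ≤ j) (hj : j < u) : σ (c + j) = j := by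
  have hσ0 := apply_zero_of_mem_PQ hσ
  have key := (strictMonoOn_Ici_of_mem_PQ hσ).apply_add_eq_of_surjOn (b := 1) (m := u)
    (j := j - 1) ?_ ?_ (by omega)
  · rwa [show c + 1 + (j - 1) = c + j by omega, show 1 + (j - 1) = j by omega] at key
  · exact Nat.one_le_iff_ne_zero.2 fun h => by
      have := σ.injective (h.trans hσ0.symm)
      omega
  · intro y hy
    refine ⟨σ⁻¹ y, ?_, by simp⟩
    by_contra h
    rcases Nat.eq_zero_or_pos (σ⁻¹ y) with h0 | hpos
    · have : y = σ 0 := Perm.inv_eq_iff_eq.1 h0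
      have := hy.1
      omega
    · have := hu (σ⁻¹ y) hpos (by simpa using h)
      simp only [Perm.coe_inv, apply_symm_apply] at this
      exact absurd hy.2 (not_lt.2 this)

section Delta

variable {u : ℕ}

theorem delta_apply_add_eq (hδ : δ ∈ PQ 1 l c)
    (hδval : ∀ i, 1 ≤ i → i ≤ c → δ i = u + i - 1) {j : ℕ} (hj₁ : 1 ≤ j) (hj : j < u) :
    δ (c + j) = j :=
  apply_add_eq_of_le_apply hδ (fun i hi₁ hic => by rw [hδval i hi₁ hic]; omega) hj₁ hj

theorem delta_apply_eq_self (hδ : δ ∈ PQ 1 l c) (hu : 1 ≤ u)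
    (hδval : ∀ i, 1 ≤ i → i ≤ c → δ i = u + i - 1) {x : ℕ} (hx : c + u ≤ x) : δ x = x := by
  have hδ0 := apply_zero_of_mem_PQ hδ
  refine Perm.apply_eq_self_of_strictMonoOn_Ici
    ((strictMonoOn_Ici_of_mem_PQ hδ).mono (Ici_subset_Ici.2 (by omega))) ?_ ?_ hx
  · intro y hy
    simp only [mem_Iio] at hy ⊢
    rcases Nat.eq_zero_or_pos y with rfl | hpos
    · omega
    by_cases hyc : y ≤ c
    · rw [hδval y hpos hyc]
      omega
    · obtain ⟨j, rfl⟩ := Nat.exists_eq_add_of_le (le_of_not_ge hyc)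
      rw [delta_apply_add_eq hδ hδval (by omega) (by omega)]
      omega
  · intro y hy
    simp only [mem_Iio] at hy
    rcases Nat.eq_zero_or_pos y with rfl | hpos
    · exact ⟨0, by simp; omega, hδ0⟩
    by_cases hyu : y < u
    · exact ⟨c + y, by simp; omega, delta_apply_add_eq hδ hδval hpos hyu⟩
    · exact ⟨y + 1 - u, by simp; omega, by rw [hδval _ (by omega) (by omega)]; omega⟩

theorem inversions_delta_subset_inversions_mul (hδ : δ ∈ PQ 1 l c)
    (hδval : ∀ i, 1 ≤ i → i ≤ c → δ i = u + i - 1) (hζ : ζ ∈ parab (u + 1) l) :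
    inversions δ ⊆ inversions (ζ * δ) := by
  rintro ⟨a, b⟩ ⟨hab, hba⟩
  dsimp only at hab hba
  have ha₁ : 1 ≤ a := by
    by_contra h
    rw [show a = 0 by omega, apply_zero_of_mem_PQ hδ] at hba
    omega
  have hac : a ≤ c := by
    by_contra h
    exact (strictMonoOn_Ici_of_mem_PQ hδ (mem_Ici.2 (by omega)) (mem_Ici.2 (by omega)) hab).asymm
      hba
  have hcb : c < b := by
    by_contra h
    exact (strictMonoOn_Icc_of_mem_PQ hδ ⟨ha₁, hac⟩ ⟨by omega, by omega⟩ hab).asymm hba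
  have hδa := hδval a ha₁ hac
  have hδb : δ b < u := by
    by_contra h
    have hval : δ (δ b + 1 - u) = δ b := by
      rw [hδval _ (by omega) (by omega)]
      omega
    have := δ.injective hval
    omega
  refine ⟨hab, ?_⟩
  change ζ (δ b) < ζ (δ a)
  rw [mem_parab_iff.1 hζ (δ b) (by simp; omega)]
  rcases (show u ≤ δ a by omega).eq_or_lt with h | h
  · rwa [← h, mem_parab_iff.1 hζ u (by simp)]
  · exact hδb.trans_le ((Nat.le_succ u).trans (le_apply_of_mem_parab hζ h))

end Delta

theorem mul_inv_mem_PQ (hω : ω ∈ PQ 1 l c) (hδ : δ ∈ PQ 1 l c) (hc : 1 ≤ c)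
    (hδval : ∀ i, 1 ≤ i → i ≤ c → δ i = ω 1 + i - 1) :
    ω * δ⁻¹ ∈ PQ (ω 1 + 1) l (c + ω 1 - 1) := by
  have hu : 1 ≤ ω 1 := le_apply_of_mem_parab hω.1 le_rfl
  have hωu : ∀ i, 1 ≤ i → i ≤ c → ω 1 ≤ ω i := fun i hi₁ hic =>
    (strictMonoOn_Icc_of_mem_PQ hω).monotoneOn ⟨le_rfl, hc⟩ ⟨hi₁, hic⟩ hi₁
  generalize hu_def : ω 1 = u at hu hωu hδval ⊢
  have hinv_mid : ∀ x, u ≤ x → x < c + u → δ⁻¹ x = x + 1 - u := fun x h₁ h₂ =>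
    Perm.inv_eq_iff_eq.2 (by rw [hδval _ (by omega) (by omega)]; omega)
  have hinv_hi : ∀ x, c + u ≤ x → δ⁻¹ x = x := fun x hx =>
    Perm.inv_eq_iff_eq.2 (delta_apply_eq_self hδ hu hδval hx).symm
  refine ⟨mem_parab_iff.2 fun x hx => ?_, fun a b ha hab hb => ?_, fun a b ha hab hb => ?_⟩
  · simp only [mem_Icc, not_and_or, not_le] at hx
    rw [Perm.mul_apply]
    rcases hx with hx | hx
    · rcases Nat.eq_zero_or_pos x with rfl | hpos
      · rw [mem_parab_iff.1 (inv_mem hδ.1) 0 (by simp), apply_zero_of_mem_PQ hω]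
      rcases (Nat.lt_succ_iff.1 hx).lt_or_eq with hxu | rfl
      · rw [Perm.inv_eq_iff_eq.2 (delta_apply_add_eq hδ hδval hpos hxu).symm]
        exact apply_add_eq_of_le_apply hω hωu hpos hxu
      · rw [hinv_mid _ le_rfl (by omega), Nat.add_sub_cancel_left, hu_def]
    · rw [mem_parab_iff.1 (inv_mem hδ.1) x (by simp; omega),
        mem_parab_iff.1 hω.1 x (by simp; omega)]
  · simp only [Perm.mul_apply]
    rw [hinv_mid a (by omega) (by omega), hinv_mid b (by omega) (by omega)]
    exact hω.2.1 _ _ (by omega) (by omega) (by omega)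
  · simp only [Perm.mul_apply]
    rw [hinv_hi a (by omega), hinv_hi b (by omega)]
    exact hω.2.2 a b (by omega) hab hb

end Shuffle

theorem stmt16_general (l c : ℕ) (hc2 : 2 ≤ c) (hcl : c ≤ l)
    (ω : Equiv.Perm ℕ) (hω : ω ∈ PQ 1 l c)
    (δ : Equiv.Perm ℕ) (hδ : δ ∈ PQ 1 l c)
    (hδval : ∀ i : ℕ, 1 ≤ i → i ≤ c → δ i = ω 1 + i - 1) :
    (1 ≤ ω 1 ∧ ω 1 ≤ l - c + 2) ∧
    (∃! ζ : Equiv.Perm ℕ, ζ ∈ PQ (ω 1 + 1) l (c + ω 1 - 1) ∧ ω = ζ * δ) ∧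
    (∀ ζ : Equiv.Perm ℕ, ζ ∈ PQ (ω 1 + 1) l (c + ω 1 - 1) → ω = ζ * δ →
      invCount ω = invCount ζ + invCount δ) := by
  refine ⟨⟨le_apply_of_mem_parab hω.1 le_rfl, ?_⟩,
    ⟨ω * δ⁻¹, ⟨mul_inv_mem_PQ hω hδ (by omega) hδval, (inv_mul_cancel_right ω δ).symm⟩,
      fun ζ hζ => eq_mul_inv_of_mul_eq hζ.2.symm⟩, fun ζ hζ hfac => ?_⟩
  · have hchain := (strictMonoOn_Icc_of_mem_PQ hω).add_le_apply_add (a := 1) (j := c - 1)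
      (Icc_subset_Icc_right (by omega))
    have hωc := apply_le_of_mem_parab hω.1 (x := 1 + (c - 1)) (by omega)
    omega
  · rw [hfac]
    exact ncard_inversions_mul (hfac ▸ inversions_finite_of_mem_parab hω.1)
      (inversions_delta_subset_inversions_mul hδ hδval hζ.1)

/-- every `ω ∈ S^{(c)}_{[l]} = (S_n)^{(c)}_{[1,l]}` factors uniquely
as `ω = ζ · δ_u` with `u = ω(1) ∈ [1, l-c+2]`, `δ_u ∈ S^{(c)}_{[l]}` the element
with `δ_u(i) = u + i − 1` for `1 ≤ i ≤ c`, and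
`ζ ∈ (S_n)^{(c+u−1)}_{[u+1,l]}`; moreover `ℓ(ω) = ℓ(ζ) + ℓ(δ_u)`. -/
theorem stmt16 (n l c : ℕ) (hn : 3 ≤ n) (hl2 : 2 ≤ l) (hln : l ≤ n - 1)
    (hc2 : 2 ≤ c) (hcl : c ≤ l)
    (ω : Equiv.Perm ℕ) (hω : ω ∈ PQ 1 l c)
    (δ : Equiv.Perm ℕ) (hδ : δ ∈ PQ 1 l c)
    (hδval : ∀ i : ℕ, 1 ≤ i → i ≤ c → δ i = ω 1 + i - 1) :
    (1 ≤ ω 1 ∧ ω 1 ≤ l - c + 2) ∧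
    (∃! ζ : Equiv.Perm ℕ, ζ ∈ PQ (ω 1 + 1) l (c + ω 1 - 1) ∧ ω = ζ * δ) ∧
    (∀ ζ : Equiv.Perm ℕ, ζ ∈ PQ (ω 1 + 1) l (c + ω 1 - 1) → ω = ζ * δ →
      invCount ω = invCount ζ + invCount δ) :=
  stmt16_general l c hc2 hcl ω hω δ hδ hδval
end
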